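/- arXiv:1506.03364 — 3 statements merged into one kernel-verified Lean document; each statement's English description precedes it below -/
import Mathlib

section
/- Let κ be a regular uncountable cardinal. The space κ^2 (with the bounded topology) is κ-compact if and only if κ is weakly compact. -/
open Cardinal Set Topology

universe u

/-- The bounded topology on `K → Y`: basic open sets are determined by an
initial segment of values. -/
def bTop (K : Type u) [LinearOrder K] (Y : Type u) : TopologicalSpace (K → Y) :=
  TopologicalSpace.generateFrom
    {U | ∃ (b : K) (s : K → Y), U = {x | ∀ i, i < b → x i = s i}}

/-- `A` is κ-compact: every open cover (for the bounded topology) has a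
subcover of size `< #K`. -/
def KCompact (K : Type u) [LinearOrder K] {Y : Type u} (A : Set (K → Y)) : Prop :=
  ∀ 𝒰 : Set (Set (K → Y)), (∀ U ∈ 𝒰, IsOpen[bTop K Y] U) → A ⊆ ⋃₀ 𝒰 →
    ∃ 𝒱 ⊆ 𝒰, #𝒱 < #K ∧ A ⊆ ⋃₀ 𝒱

/-- `B` is a `K_κ` subset: a union of κ-many κ-compact sets. -/
def IsKK (K : Type u) [LinearOrder K] (B : Set (K → K)) : Prop :=
  ∃ C : K → Set (K → K), (∀ b, KCompact K (C b)) ∧ B = ⋃ b, C b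

/-- Nodes of the tree `Y^{<K}`: sequences of length `b`, for `b : K`. -/
abbrev Nd (K : Type u) [LinearOrder K] (Y : Type u) := Σ b : K, (Set.Iio b → Y)

/-- Restriction of a node to a smaller length. -/
def ndRes (K : Type u) [LinearOrder K] {Y : Type u} (p : Nd K Y) (c : K) (h : c ≤ p.1) :
    Nd K Y :=
  ⟨c, fun i => p.2 ⟨i.1, lt_of_lt_of_le i.2 h⟩⟩

/-- Restriction of a branch `x : K → Y` to length `b`. -/
def xRes (K : Type u) [LinearOrder K] {Y : Type u} (x : K → Y) (b : K) : Nd K Y :=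
  ⟨b, fun i => x i.1⟩

/-- `q` extends `p` as a sequence. -/
def NdExt (K : Type u) [LinearOrder K] {Y : Type u} (q p : Nd K Y) : Prop :=
  ∃ h : p.1 ≤ q.1, ∀ i : Set.Iio p.1, q.2 ⟨i.1, lt_of_lt_of_le i.2 h⟩ = p.2 i

/-- A subtree of `Y^{<K}`: a set of nodes closed under restriction. -/
def IsSubtree (K : Type u) [LinearOrder K] {Y : Type u} (T : Set (Nd K Y)) : Prop :=
  ∀ p ∈ T, ∀ c, ∀ h : c ≤ p.1, ndRes K p c h ∈ T

/-- The body `[T]`: the set of `K`-branches through `T`. -/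
def body (K : Type u) [LinearOrder K] {Y : Type u} (T : Set (Nd K Y)) : Set (K → Y) :=
  {x | ∀ b : K, xRes K x b ∈ T}

/-- `T` is pruned: every node is extended by a branch. -/
def Pruned (K : Type u) [LinearOrder K] {Y : Type u} (T : Set (Nd K Y)) : Prop :=
  ∀ p ∈ T, ∃ x ∈ body K T, NdExt K (xRes K x p.1) p

/-- `b` is a limit element: not least, and with no immediate predecessor. -/
def IsLimElt (K : Type u) [LinearOrder K] (b : K) : Prop :=
  (∃ c, c < b) ∧ ∀ c, c < b → ∃ d, c < d ∧ d < b

/-- Superclosed: closed under unions of increasing sequences of length `< K`. -/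
def Superclosed (K : Type u) [LinearOrder K] {Y : Type u} (T : Set (Nd K Y)) : Prop :=
  ∀ p : Nd K Y, IsLimElt K p.1 → (∀ c, ∀ h : c < p.1, ndRes K p c h.le ∈ T) → p ∈ T

/-- The values at position `p.1` realized by extensions of `p` in `T`, i.e. the
immediate successors of `p` in `T`. -/
def splitVals (K : Type u) [LinearOrder K] {Y : Type u} (T : Set (Nd K Y)) (p : Nd K Y) :
    Set Y :=
  {a | ∃ q ∈ T, ∃ h : p.1 < q.1,
    (∀ i : Set.Iio p.1, q.2 ⟨i.1, i.2.trans h⟩ = p.2 i) ∧ q.2 ⟨p.1, h⟩ = a}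

/-- A perfect tree: a nonempty superclosed subtree in which every node is
extended by a 2-splitting node. -/
def PerfectTree (K : Type u) [LinearOrder K] (T : Set (Nd K K)) : Prop :=
  T.Nonempty ∧ IsSubtree K T ∧ Superclosed K T ∧
    ∀ p ∈ T, ∃ q ∈ T, NdExt K q p ∧
      ∃ a ∈ splitVals K T q, ∃ a' ∈ splitVals K T q, a ≠ a'

/-- A κ-Miller tree: a nonempty superclosed subtree in which every node is
extended by a κ-splitting node. -/
def MillerTree (K : Type u) [LinearOrder K] (T : Set (Nd K K)) : Prop :=
  T.Nonempty ∧ IsSubtree K T ∧ Superclosed K T ∧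
    ∀ p ∈ T, ∃ q ∈ T, NdExt K q p ∧ #K ≤ #(splitVals K T q)

/-- A κ-tree: a subtree of height `K` all of whose levels have size `< #K`. -/
def KTree (K : Type u) [LinearOrder K] {Y : Type u} (T : Set (Nd K Y)) : Prop :=
  (∀ b : K, ∃ t : Set.Iio b → Y, (⟨b, t⟩ : Nd K Y) ∈ T) ∧
    ∀ b : K, #{t : Set.Iio b → Y | (⟨b, t⟩ : Nd K Y) ∈ T} < #K

/-- A κ-Aronszajn tree: a κ-tree with no branch. -/
def Aronszajn (K : Type u) [LinearOrder K] (S : Set (Nd K K)) : Prop :=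
  IsSubtree K S ∧ KTree K S ∧ body K S = ∅

/-- The tree property for `K`: every κ-tree has a branch. -/
def TreeProp (K : Type u) [LinearOrder K] : Prop :=
  ∀ T : Set (Nd K K), IsSubtree K T → KTree K T → (body K T).Nonempty

/-- weak compactness: inaccessibility together with the tree property. -/
def WComp (K : Type u) [LinearOrder K] : Prop :=
  (#K).IsInaccessible ∧ TreeProp K

/-- `C` is homeomorphic to the generalized Baire space `K → K`. -/
def HomeoToBaire (K : Type u) [LinearOrder K] (C : Set (K → K)) : Prop :=
  letI := bTop K K
  Nonempty (↥C ≃ₜ (K → K))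

/-- `C` is homeomorphic to the generalized Cantor space `K → ULift.{u} Bool`. -/
def HomeoToCantor (K : Type u) [LinearOrder K] (C : Set (K → K)) : Prop :=
  letI := bTop K K
  letI : TopologicalSpace (K → ULift.{u} Bool) := bTop K (ULift.{u} Bool)
  Nonempty (↥C ≃ₜ (K → ULift.{u} Bool))

/-- The Hurewicz dichotomy for `A`. -/
def HD (K : Type u) [LinearOrder K] (A : Set (K → K)) : Prop :=
  (∃ B, IsKK K B ∧ A ⊆ B) ∨
    ∃ C ⊆ A, IsClosed[bTop K K] C ∧ HomeoToBaire K C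

/-- The Miller-tree Hurewicz dichotomy for `A`. -/
def MillerHD (K : Type u) [LinearOrder K] (A : Set (K → K)) : Prop :=
  (∃ B, IsKK K B ∧ A ⊆ B) ∨ ∃ T, MillerTree K T ∧ body K T ⊆ A

/-- Σ¹₁ subsets of `K → K`: projections of closed subsets of the product. -/
def Sigma11 (K : Type u) [LinearOrder K] (A : Set (K → K)) : Prop :=
  letI := bTop K K
  ∃ C : Set ((K → K) × (K → K)), IsClosed C ∧ A = Prod.fst '' C

/-- The κ-perfect set property. -/
def PSP (K : Type u) [LinearOrder K] (A : Set (K → K)) : Prop :=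
  #A ≤ #K ∨ ∃ C ⊆ A, IsClosed[bTop K K] C ∧ HomeoToCantor K C

/-- `A ⊆ K → K` is bounded. -/
def BddSet (K : Type u) [LinearOrder K] (A : Set (K → K)) : Prop :=
  ∃ x : K → K, ∀ y ∈ A, ∀ i, y i ≤ x i

/-- `A ⊆ K → K` is eventually bounded. -/
def EvBddSet (K : Type u) [LinearOrder K] (A : Set (K → K)) : Prop :=
  ∃ x : K → K, ∀ y ∈ A, ∃ b : K, ∀ i, b ≤ i → y i ≤ x i

/-- Nodes of the product tree `K^{<K} × K^{<K}` (pairs of equal length). -/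
abbrev PNd (K : Type u) [LinearOrder K] := Σ b : K, (Set.Iio b → K) × (Set.Iio b → K)

/-- Subtree of the product tree: closed under simultaneous restriction. -/
def IsPSubtree (K : Type u) [LinearOrder K] (T : Set (PNd K)) : Prop :=
  ∀ p ∈ T, ∀ c, ∀ h : c ≤ p.1,
    (⟨c, fun i => p.2.1 ⟨i.1, lt_of_lt_of_le i.2 h⟩,
        fun i => p.2.2 ⟨i.1, lt_of_lt_of_le i.2 h⟩⟩ : PNd K) ∈ T

/-- The projection `p[T]` of the set of branches of a product tree to the first
coordinate. -/
def pProj (K : Type u) [LinearOrder K] (T : Set (PNd K)) : Set (K → K) :=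
  {x | ∃ y : K → K, ∀ b : K,
    (⟨b, fun i => x i.1, fun i => y i.1⟩ : PNd K) ∈ T}

/-- An `∃^x`-perfect embedding into a product tree `T`. -/
def PerfEmb (K : Type u) [LinearOrder K] (T : Set (PNd K)) (e : Nd K (ULift.{u} Bool) → PNd K) : Prop :=
  (∀ u, e u ∈ T) ∧
  (∀ u u' : Nd K (ULift.{u} Bool), ∀ h : u.1 < u'.1,
     (∀ i : Set.Iio u.1, u'.2 ⟨i.1, i.2.trans h⟩ = u.2 i) →
     ∃ h' : (e u).1 < (e u').1,
       (∀ i : Set.Iio (e u).1, (e u').2.1 ⟨i.1, i.2.trans h'⟩ = (e u).2.1 i) ∧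
       (∀ i : Set.Iio (e u).1, (e u').2.2 ⟨i.1, i.2.trans h'⟩ = (e u).2.2 i)) ∧
  (∀ u u' : Nd K (ULift.{u} Bool), ¬ NdExt K u u' → ¬ NdExt K u' u →
     ¬ NdExt K ⟨(e u).1, (e u).2.1⟩ ⟨(e u').1, (e u').2.1⟩ ∧
     ¬ NdExt K ⟨(e u').1, (e u').2.1⟩ ⟨(e u).1, (e u).2.1⟩) ∧
  (∀ u : Nd K (ULift.{u} Bool), IsLimElt K u.1 → ∀ d, d < (e u).1 →
     ∃ c, ∃ h : c < u.1, d < (e (ndRes K u c h.le)).1)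

/-- The immediate extension `u⌢⟨a⟩` of a node `u` by a value `a`. -/
def extNd (K : Type u) [LinearOrder K] [SuccOrder K] (u : Nd K K) (a : K) : Nd K K :=
  ⟨Order.succ u.1, fun i => if h : i.1 < u.1 then u.2 ⟨i.1, h⟩ else a⟩

/-- An `∃^x`-superperfect embedding into a product tree `T`. -/
def SuperPerfEmb (K : Type u) [LinearOrder K] [SuccOrder K] (T : Set (PNd K))
    (e : Nd K K → PNd K) : Prop :=
  (∀ u, e u ∈ T) ∧
  (∀ u u' : Nd K K, ∀ h : u.1 < u'.1,
     (∀ i : Set.Iio u.1, u'.2 ⟨i.1, i.2.trans h⟩ = u.2 i) →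
     ∃ h' : (e u).1 < (e u').1,
       (∀ i : Set.Iio (e u).1, (e u').2.1 ⟨i.1, i.2.trans h'⟩ = (e u).2.1 i) ∧
       (∀ i : Set.Iio (e u).1, (e u').2.2 ⟨i.1, i.2.trans h'⟩ = (e u).2.2 i)) ∧
  (∀ u : Nd K K, IsLimElt K u.1 → ∀ d, d < (e u).1 →
     ∃ c, ∃ h : c < u.1, d < (e (ndRes K u c h.le)).1) ∧
  (∀ u : Nd K K, ∃ γ : K, (e u).1 ≤ γ ∧
     ∃ hlen : ∀ a : K, γ < (e (extNd K u a)).1,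
       ∀ a b : K, a ≠ b →
         (∀ i : Set.Iio γ,
           (e (extNd K u a)).2.1 ⟨i.1, i.2.trans (hlen a)⟩ =
           (e (extNd K u b)).2.1 ⟨i.1, i.2.trans (hlen b)⟩) ∧
         (e (extNd K u a)).2.1 ⟨γ, hlen a⟩ ≠ (e (extNd K u b)).2.1 ⟨γ, hlen b⟩)

/-!
Write `κ = #K`; by König's theorem, `κ^{<κ} = κ` makes `κ` regular. If `2^κ` is `κ`-compact,
the cover of `2^κ` by the `2^|b|` disjoint basic sets of height `b` shows `2^|b| < κ`, so `κ` is
a strong limit. For the tree property, code the nodes of a `κ`-tree `T` by elements of `K`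
(possible as `κ^{<κ} = κ`). The points of `2^κ` coding the set of initial segments of some node
at level `b` form a closed set, since only the `< κ` many codes of nodes of height `≤ b` matter;
these sets decrease with `b`, so `κ`-compactness gives a point in all of them, and that point
codes a branch of `T`.

Conversely, given an open cover, the nodes whose basic set lies in no member of the cover form a
subtree without branches whose levels have size `< κ` by strong limitness. By the tree property
one of its levels is empty, and choosing a cover member for each node of that level gives a
subcover of size `< κ`.
-/

open scoped Ordinal

namespace Cardinal

theorem isRegular_of_powerlt_self {c : Cardinal} (hc : ℵ₀ ≤ c) (h : c ^< c = c) :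
    c.IsRegular := by
  refine ⟨hc, not_lt.mp fun hcof => ?_⟩
  have := (lt_power_cof_ord hc).trans_le ((le_powerlt c hcof).trans h.le)
  exact this.false

theorem IsStrongLimit.power_lt {a b c : Cardinal} (hc : c.IsStrongLimit) (ha : a < c)
    (hb : b < c) : a ^ b < c :=
  calc a ^ b ≤ (2 ^ a) ^ b := power_le_power_right (cantor a).le
    _ = 2 ^ (a * b) := by rw [← power_mul]
    _ < c := hc.isStrongPrelimit (mul_lt_of_lt hc.aleph0_le ha hb)

end Cardinal

section Cardinality

variable {K : Type u} [LinearOrder K]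

theorem ord_mk_eq_typeLT_of_forall_mk_Iio_lt [WellFoundedLT K]
    (hseg : ∀ b : K, #(Iio b) < #K) : (#K).ord = typeLT K := by
  refine le_antisymm (Cardinal.ord_le.mpr (Ordinal.card_type _).ge) ?_
  refine le_of_forall_lt fun o ho => ?_
  obtain ⟨b, rfl⟩ := Ordinal.typein_surj _ ho
  exact Cardinal.lt_ord.mpr (hseg b)

theorem cof_eq_mk_of_isRegular [WellFoundedLT K] (hord : (#K).ord = typeLT K)
    (hreg : (#K).IsRegular) :
    Order.cof K = #K := by
  rw [← Ordinal.cof_type, ← hord, hreg.cof_ord]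

theorem exists_gt_of_mk_lt_cof {S : Set K} (hS : #S < Order.cof K) : ∃ b, ∀ s ∈ S, s < b :=
  not_isCofinal_iff.mp fun h => (Order.cof_le h).not_gt hS

theorem exists_mk_Iio_eq [WellFoundedLT K] {x : Cardinal.{u}} (hx : x < #K) :
    ∃ b : K, #(Iio b) = x := by
  have : x.ord < typeLT K :=
    (Cardinal.ord_lt_ord.mpr hx).trans_le (Cardinal.ord_le.mpr (Ordinal.card_type _).ge)
  obtain ⟨b, hb⟩ := Ordinal.typein_surj _ this
  refine ⟨b, (Ordinal.card_typein (r := ((· < ·) : K → K → Prop)) b).symm.trans ?_⟩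
  rw [hb, Cardinal.card_ord]

theorem mk_nd_le [WellFoundedLT K] (hord : (#K).ord = typeLT K) (hK : ℵ₀ ≤ #K)
    (hpow : #K ^< #K = #K) : #(Nd K K) ≤ #K :=
  calc #(Nd K K) = Cardinal.sum fun b : K => #K ^ #(Iio b) := by
        simp only [Cardinal.mk_sigma, Cardinal.power_def]
    _ ≤ Cardinal.sum fun _ : K => #K := Cardinal.sum_le_sum _ _ fun b =>
        (Cardinal.le_powerlt _ (Cardinal.mk_Iio_lt b hord)).trans hpow.le
    _ = #K := by rw [Cardinal.sum_const', Cardinal.mul_eq_self hK]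

end Cardinality

section BoundedTopology

variable {K : Type u} [LinearOrder K] {Y : Type u}

def cyl (p : Nd K Y) : Set (K → Y) :=
  {x | ∀ i : Iio p.1, x i = p.2 i}

theorem cyl_subset_cyl_ndRes (p : Nd K Y) {c : K} (h : c ≤ p.1) :
    cyl p ⊆ cyl (ndRes K p c h) :=
  fun _ hx i => hx ⟨i, i.2.trans_le h⟩

theorem isOpen_cyl_xRes (x : K → Y) (b : K) : IsOpen[bTop K Y] (cyl (xRes K x b)) :=
  TopologicalSpace.isOpen_generateFrom_of_mem ⟨b, x, by ext; simp [cyl, xRes]⟩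

theorem exists_cyl_subset_of_isOpen [Nonempty K] {U : Set (K → Y)} (hU : IsOpen[bTop K Y] U)
    {x : K → Y} (hx : x ∈ U) : ∃ b, cyl (xRes K x b) ⊆ U := by
  induction hU generalizing x with
  | basic V hV =>
    obtain ⟨b, s, rfl⟩ := hV
    exact ⟨b, fun z hz i hi => (hz ⟨i, hi⟩).trans (hx i hi)⟩
  | univ => exact ⟨Classical.arbitrary K, subset_univ _⟩
  | inter V W _ _ ihV ihW =>
    obtain ⟨b₁, h₁⟩ := ihV hx.1
    obtain ⟨b₂, h₂⟩ := ihW hx.2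
    exact ⟨max b₁ b₂, fun z hz =>
      ⟨h₁ (cyl_subset_cyl_ndRes _ (le_max_left _ _) hz),
        h₂ (cyl_subset_cyl_ndRes _ (le_max_right _ _) hz)⟩⟩
  | sUnion S _ ih =>
    obtain ⟨V, hV, hxV⟩ := hx
    obtain ⟨b, hb⟩ := ih V hV hxV
    exact ⟨b, hb.trans (subset_sUnion_of_mem hV)⟩

theorem isOpen_of_forall_cyl_subset (b : K) {A : Set (K → Y)}
    (h : ∀ x ∈ A, cyl (xRes K x b) ⊆ A) : IsOpen[bTop K Y] A := by
  have hA : A = ⋃ x ∈ A, cyl (xRes K x b) :=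
    Subset.antisymm (fun x hx => mem_biUnion hx fun _ => rfl) (iUnion₂_subset h)
  rw [hA]
  exact @isOpen_biUnion _ _ (bTop K Y) _ _ fun x _ => isOpen_cyl_xRes x b

end BoundedTopology

namespace KCompact

variable {K : Type u} [LinearOrder K] {Y : Type u}

theorem power_lt [WellFoundedLT K] [Nonempty Y] (hK : KCompact K (univ : Set (K → Y)))
    {x : Cardinal.{u}} (hx : x < #K) : #Y ^ x < #K := by
  obtain ⟨b, rfl⟩ := exists_mk_Iio_eq hx
  obtain ⟨𝒱, h𝒱, h𝒱K, hcov⟩ := hK (range fun s : K → Y => cyl (xRes K s b))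
    (by rintro _ ⟨s, rfl⟩; exact isOpen_cyl_xRes s b)
    (fun s _ => ⟨_, ⟨s, rfl⟩, fun _ => rfl⟩)
  have hsel (V : 𝒱) : ∃ s : K → Y, cyl (xRes K s b) = V := h𝒱 V.2
  choose s hs using hsel
  refine lt_of_le_of_lt ?_ h𝒱K
  rw [Cardinal.power_def]
  refine Cardinal.mk_le_of_surjective (f := fun V i => s V i) fun t => ?_
  let x : K → Y := fun i => if h : i < b then t ⟨i, h⟩ else Classical.arbitrary Y
  obtain ⟨V, hV, hxV⟩ := hcov (mem_univ x)
  have hxs : x ∈ cyl (xRes K (s ⟨V, hV⟩) b) := by rw [hs]; exact hxV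
  refine ⟨⟨V, hV⟩, funext fun i => ?_⟩
  exact (hxs i).symm.trans (dif_pos i.2)

theorem iInter_nonempty (hK : KCompact K (univ : Set (K → Y))) (hcof : Order.cof K = #K)
    {F : K → Set (K → Y)} (hanti : Antitone F) (hclosed : ∀ b, IsClosed[bTop K Y] (F b))
    (hne : ∀ b, (F b).Nonempty) : (⋂ b, F b).Nonempty := by
  by_contra hempty
  obtain ⟨𝒱, h𝒱, h𝒱K, hcov⟩ := hK (range fun b => (F b)ᶜ)
    (by rintro _ ⟨b, rfl⟩; exact (hclosed b).isOpen_compl)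
    (fun x _ => by simpa [← compl_iInter] using fun h => hempty ⟨x, h⟩)
  have hsel (V : 𝒱) : ∃ b, (F b)ᶜ = V := h𝒱 V.2
  choose g hg using hsel
  obtain ⟨b, hb⟩ := exists_gt_of_mk_lt_cof (S := range g)
    (Cardinal.mk_range_le.trans_lt (hcof ▸ h𝒱K))
  obtain ⟨x, hx⟩ := hne b
  obtain ⟨V, hV, hxV⟩ := hcov (mem_univ x)
  have hxF : x ∉ F (g ⟨V, hV⟩) := by rw [← mem_compl_iff, hg]; exact hxV
  exact hxF (hanti (hb _ (mem_range_self _)).le hx)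

end KCompact

section Trees

variable {K : Type u} [LinearOrder K] {Y : Type u}

theorem ndExt_refl (p : Nd K Y) : NdExt K p p :=
  ⟨le_rfl, fun _ => rfl⟩

theorem ndExt_ndRes_iff {p q : Nd K Y} {c : K} (hc : c ≤ p.1) (hq : q.1 ≤ c) :
    NdExt K (ndRes K p c hc) q ↔ NdExt K p q :=
  ⟨fun ⟨_, h⟩ => ⟨hq.trans hc, h⟩, fun ⟨_, h⟩ => ⟨hq, h⟩⟩

theorem KTree.mk_setOf_le_lt [WellFoundedLT K] (hord : (#K).ord = typeLT K)
    (hreg : (#K).IsRegular) {T : Set (Nd K Y)} (hT : KTree K T) (b : K) :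
    #{q | q ∈ T ∧ q.1 ≤ b} < #K := by
  have hsub : {q | q ∈ T ∧ q.1 ≤ b} ⊆
      ⋃ c : Iic b, Sigma.mk c.1 '' {t : Iio c.1 → Y | (⟨c, t⟩ : Nd K Y) ∈ T} := by
    rintro ⟨c, t⟩ ⟨hq, hc⟩
    exact mem_iUnion.mpr ⟨⟨c, hc⟩, t, hq, rfl⟩
  refine (Cardinal.mk_le_mk_of_subset hsub).trans_lt ?_
  rw [Cardinal.card_iUnion_lt_iff_forall_of_isRegular hreg
    (Cardinal.mk_Iic_lt b hord hreg.aleph0_le)]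
  exact fun c => Cardinal.mk_image_le.trans_lt (hT.2 c)

theorem body_nonempty_of_coherent [NoMaxOrder K] {T : Set (Nd K Y)}
    (t : ∀ b : K, Iio b → Y) (hT : ∀ b, (⟨b, t b⟩ : Nd K Y) ∈ T)
    (hcoh : ∀ c b, c ≤ b → NdExt K ⟨b, t b⟩ ⟨c, t c⟩) : (body K T).Nonempty := by
  choose σ hσ using fun i : K => exists_gt i
  refine ⟨fun i => t (σ i) ⟨i, hσ i⟩, fun b => ?_⟩
  suffices h : (fun i : Iio b => t (σ i) ⟨i, hσ i⟩) = t b by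
    unfold xRes; rw [h]; exact hT b
  funext i
  obtain ⟨_, h₁⟩ := hcoh (σ i) (max b (σ i)) (le_max_right _ _)
  obtain ⟨_, h₂⟩ := hcoh b (max b (σ i)) (le_max_left _ _)
  exact (h₁ ⟨i, hσ i⟩).symm.trans (h₂ i)

def ndMap {Z : Type u} (f : Y → Z) (p : Nd K Y) : Nd K Z :=
  ⟨p.1, f ∘ p.2⟩

theorem TreeProp.body_nonempty_of_injective [Nonempty Y] (htp : TreeProp K) {f : Y → K}
    (hf : f.Injective) {T : Set (Nd K Y)} (hT : IsSubtree K T) (hkt : KTree K T) :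
    (body K T).Nonempty := by
  have hlevel : ∀ b, {s : Iio b → K | (⟨b, s⟩ : Nd K K) ∈ ndMap f '' T} ⊆
      (f ∘ ·) '' {t : Iio b → Y | (⟨b, t⟩ : Nd K Y) ∈ T} := by
    rintro b s ⟨⟨c, t⟩, ht, he⟩
    obtain ⟨rfl, he⟩ := Sigma.mk.inj_iff.mp he
    exact ⟨t, ht, eq_of_heq he⟩
  have hkt' : KTree K (ndMap f '' T) :=
    ⟨fun b => (hkt.1 b).elim fun t ht => ⟨f ∘ t, ⟨b, t⟩, ht, rfl⟩,
      fun b => (Cardinal.mk_le_mk_of_subset (hlevel b)).trans_lt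
        (Cardinal.mk_image_le.trans_lt (hkt.2 b))⟩
  obtain ⟨x, hx⟩ := htp (ndMap f '' T)
    (by rintro _ ⟨p, hp, rfl⟩ c h; exact ⟨_, hT p hp c h, rfl⟩) hkt'
  refine ⟨fun i => f.invFun (x i), fun b => ?_⟩
  obtain ⟨t, ht, hxt⟩ := hlevel b (hx b)
  suffices h : (fun i : Iio b => f.invFun (x i)) = t by
    unfold xRes; rw [h]; exact ht
  funext i
  rw [show x i = f (t i) from (congrFun hxt i).symm, f.leftInverse_invFun hf]

end Trees

section TreePropertyOfCompact

variable {K : Type u} [LinearOrder K] {Y : Type u}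

/-- `x` codes a node `⟨b, t⟩ ∈ T`: among the nodes `q ∈ T` of height `≤ b`, `x (code q)`
holds exactly for the initial segments of `⟨b, t⟩`. -/
def chainCodes (T : Set (Nd K Y)) (code : Nd K Y → K) (b : K) : Set (K → ULift.{u} Bool) :=
  {x | ∃ t : Iio b → Y, (⟨b, t⟩ : Nd K Y) ∈ T ∧
    ∀ q ∈ T, q.1 ≤ b → ((x (code q)).down ↔ NdExt K ⟨b, t⟩ q)}

variable {T : Set (Nd K Y)} {code : Nd K Y → K}

theorem chainCodes_antitone (hT : IsSubtree K T) : Antitone (chainCodes T code) := by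
  rintro c b hcb x ⟨t, ht, hx⟩
  refine ⟨(ndRes K ⟨b, t⟩ c hcb).2, hT _ ht c hcb, fun q hq hqc => ?_⟩
  rw [hx q hq (hqc.trans hcb)]
  exact (ndExt_ndRes_iff hcb hqc).symm

theorem chainCodes_nonempty (hcode : code.Injective) {b : K} {t : Iio b → Y}
    (ht : (⟨b, t⟩ : Nd K Y) ∈ T) : (chainCodes T code b).Nonempty := by
  classical
  refine ⟨fun k => ⟨decide (∃ q, code q = k ∧ NdExt K ⟨b, t⟩ q)⟩, t, ht,
    fun q _ _ => ?_⟩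
  simp [hcode.eq_iff]

theorem mem_chainCodes_of_forall_eq {b : K} {x y : K → ULift.{u} Bool}
    (hx : x ∈ chainCodes T code b) (hxy : ∀ q ∈ T, q.1 ≤ b → y (code q) = x (code q)) :
    y ∈ chainCodes T code b := by
  obtain ⟨t, ht, hxt⟩ := hx
  exact ⟨t, ht, fun q hq hqb => by rw [hxy q hq hqb]; exact hxt q hq hqb⟩

theorem isClosed_chainCodes [WellFoundedLT K] (hord : (#K).ord = typeLT K)
    (hreg : (#K).IsRegular) (hkt : KTree K T) (b : K) :
    IsClosed[bTop K (ULift.{u} Bool)] (chainCodes T code b) := by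
  obtain ⟨β, hβ⟩ := exists_gt_of_mk_lt_cof (S := code '' {q | q ∈ T ∧ q.1 ≤ b}) (by
    rw [cof_eq_mk_of_isRegular hord hreg]
    exact Cardinal.mk_image_le.trans_lt (hkt.mk_setOf_le_lt hord hreg b))
  refine @IsClosed.mk _ (bTop K _) _ (isOpen_of_forall_cyl_subset β fun x hx y hy hyF => hx ?_)
  exact mem_chainCodes_of_forall_eq hyF fun q hq hqb =>
    (hy ⟨_, hβ _ ⟨q, ⟨hq, hqb⟩, rfl⟩⟩).symm

theorem body_nonempty_of_mem_iInter_chainCodes [NoMaxOrder K] {x : K → ULift.{u} Bool}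
    (hx : x ∈ ⋂ b, chainCodes T code b) : (body K T).Nonempty := by
  choose t ht hxt using mem_iInter.mp hx
  refine body_nonempty_of_coherent t ht fun c b hcb => ?_
  exact (hxt b _ (ht c) hcb).mp ((hxt c _ (ht c) le_rfl).mpr (ndExt_refl _))

end TreePropertyOfCompact

theorem treeProp_of_kCompact {K : Type u} [LinearOrder K] [WellFoundedLT K]
    (hord : (#K).ord = typeLT K) (hreg : (#K).IsRegular) (hnd : #(Nd K K) ≤ #K)
    (hK : KCompact K (univ : Set (K → ULift.{u} Bool))) : TreeProp K := by
  intro T hT hkt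
  obtain ⟨code⟩ := (Cardinal.le_def _ _).mp hnd
  have hcof := cof_eq_mk_of_isRegular hord hreg
  have : NoMaxOrder K := ⟨fun a => (exists_gt_of_mk_lt_cof (S := {a}) (by
    rw [Cardinal.mk_singleton, hcof]
    exact Cardinal.one_lt_aleph0.trans_le hreg.aleph0_le)).imp fun b hb => hb a rfl⟩
  obtain ⟨x, hx⟩ := hK.iInter_nonempty hcof (chainCodes_antitone hT)
    (isClosed_chainCodes hord hreg hkt)
    (fun b => (hkt.1 b).elim fun _ ht => chainCodes_nonempty code.injective ht)
  exact body_nonempty_of_mem_iInter_chainCodes hx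

section CompactOfTreeProp

variable {K : Type u} [LinearOrder K] {Y : Type u}

def uncoveredNodes (𝒰 : Set (Set (K → Y))) : Set (Nd K Y) :=
  {p | ∀ U ∈ 𝒰, ¬ cyl p ⊆ U}

theorem isSubtree_uncoveredNodes (𝒰 : Set (Set (K → Y))) : IsSubtree K (uncoveredNodes 𝒰) :=
  fun p hp _ h U hU hsub => hp U hU ((cyl_subset_cyl_ndRes p h).trans hsub)

theorem body_uncoveredNodes_eq_empty [Nonempty K] {𝒰 : Set (Set (K → Y))}
    (hopen : ∀ U ∈ 𝒰, IsOpen[bTop K Y] U) (hcov : Set.univ ⊆ ⋃₀ 𝒰) :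
    body K (uncoveredNodes 𝒰) = ∅ := by
  refine eq_empty_of_forall_notMem fun x hx => ?_
  obtain ⟨U, hU, hxU⟩ := hcov (mem_univ x)
  obtain ⟨b, hb⟩ := exists_cyl_subset_of_isOpen (hopen U hU) hxU
  exact hx b U hU hb

theorem kCompact_of_treeProp [Nonempty Y] (hseg : ∀ b : K, #(Iio b) < #K)
    (hK : (#K).IsStrongLimit) (htp : TreeProp K) (hY : #Y < #K) :
    KCompact K (univ : Set (K → Y)) := by
  intro 𝒰 hopen hcov
  have : Nonempty K := Cardinal.mk_ne_zero_iff.mp hK.ne_zero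
  have hsmall (b : K) : #(Iio b → Y) < #K := by
    rw [← Cardinal.power_def]
    exact hK.power_lt hY (hseg b)
  by_cases hlevels : ∀ b : K, ∃ t : Iio b → Y, (⟨b, t⟩ : Nd K Y) ∈ uncoveredNodes 𝒰
  · obtain ⟨f⟩ := (Cardinal.le_def Y K).mp hY.le
    have hkt : KTree K (uncoveredNodes 𝒰) :=
      ⟨hlevels, fun b => (Cardinal.mk_subtype_le _).trans_lt (hsmall b)⟩
    have hbody := htp.body_nonempty_of_injective f.injective (isSubtree_uncoveredNodes 𝒰) hkt
    rw [body_uncoveredNodes_eq_empty hopen hcov] at hbody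
    exact absurd hbody Set.not_nonempty_empty
  · obtain ⟨b, hb⟩ := not_forall.mp hlevels
    have hcovered (t : Iio b → Y) : ∃ U ∈ 𝒰, cyl (⟨b, t⟩ : Nd K Y) ⊆ U := by
      simpa [uncoveredNodes] using not_exists.mp hb t
    choose U hU hcyl using hcovered
    exact ⟨range U, range_subset_iff.mpr hU, Cardinal.mk_range_le.trans_lt (hsmall b),
      fun z _ => ⟨_, mem_range_self (fun i : Iio b => z i), hcyl _ fun _ => rfl⟩⟩

end CompactOfTreeProp

/-- The generalized Cantor space `K → 2` is κ-compact iff `K` is weakly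
compact. -/
theorem cantor_kCompact_iff_weaklyCompact (K : Type u) [LinearOrder K] [WellFoundedLT K]
    (hseg : ∀ b : K, #(Set.Iio b) < #K)
    (hunc : ℵ₀ < #K) (hpow : Cardinal.powerlt #K #K = #K) :
    KCompact K (Set.univ : Set (K → ULift.{u} Bool)) ↔ WComp K := by
  have hord := ord_mk_eq_typeLT_of_forall_mk_Iio_lt hseg
  have hreg := Cardinal.isRegular_of_powerlt_self hunc.le hpow
  constructor
  · intro hK
    have hstrong : (#K).IsStrongLimit :=
      ⟨hreg.ne_zero, fun x hx => by simpa using hK.power_lt hx⟩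
    exact ⟨Cardinal.isInaccessible_def.mpr ⟨hunc, hreg, hstrong⟩,
      treeProp_of_kCompact hord hreg (mk_nd_le hord hunc.le hpow) hK⟩
  · intro hw
    exact kCompact_of_treeProp hseg hw.1.isStrongLimit hw.2
      (by simpa using (Cardinal.natCast_lt_aleph0 (n := 2)).trans hunc)
end

section
/- Let κ be an uncountable cardinal with κ = κ^{<κ}. If A ⊆ κ^κ is contained in a κ-compact subset of κ^κ, then A is bounded. -/
open Cardinal Set Topology

universe u

/-!
For each coordinate `i`, the sets `{x | x i = c}` are open in the bounded topology and cover `B`,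
so κ-compactness leaves fewer than `κ` of them, i.e. `B` takes fewer than `κ` values at `i`.
Since `κ^{<κ} = κ` forces `κ` to be regular (König), these values are bounded below `κ`, and the
bounds, coordinate by coordinate, bound `B`.
-/

theorem Cardinal.isRegular_of_powerlt_self_s5 {c : Cardinal} (hc : ℵ₀ ≤ c) (h : c ^< c = c) :
    c.IsRegular :=
  ⟨hc, le_of_not_gt fun hcof => (lt_power_cof_ord hc).not_ge ((le_powerlt c hcof).trans h.le)⟩

theorem exists_forall_lt_of_mk_lt {K : Type u} [LinearOrder K] (hK : (#K).IsRegular)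
    (hseg : ∀ b : K, #(Iio b) < #K) {S : Set K} (hS : #S < #K) : ∃ x, ∀ c ∈ S, c < x := by
  have hIic (c : K) : #(Iic c) < #K := by
    rw [← Iio_insert]
    exact mk_insert_le.trans_lt (add_lt_of_lt hK.aleph0_le (hseg c) (hK.nat_lt 1))
  have hsmall : #(⋃ c ∈ S, Iic c) < #K :=
    (card_biUnion_lt_iff_forall_of_isRegular hK hS).2 fun c _ => hIic c
  obtain ⟨x, hx⟩ : (⋃ c ∈ S, Iic c)ᶜ.Nonempty := by
    rw [nonempty_compl]
    rintro h
    rw [h, mk_univ] at hsmall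
    exact hsmall.false
  simp only [mem_compl_iff, mem_iUnion, mem_Iic, not_exists, not_le] at hx
  exact ⟨x, hx⟩

theorem isOpen_bTop_eval_eq {K Y : Type u} [LinearOrder K] {i b : K} (hib : i < b) (c : Y) :
    IsOpen[bTop K Y] {x | x i = c} := by
  let := bTop K Y
  refine isOpen_iff_forall_mem_open.2 fun x hx => ⟨{y | ∀ j < b, y j = x j}, ?_, ?_, ?_⟩
  · exact fun y hy => (hy i hib).trans hx
  · exact TopologicalSpace.isOpen_generateFrom_of_mem ⟨b, x, rfl⟩
  · exact fun _ _ => rfl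

theorem KCompact.mk_image_eval_lt {K Y : Type u} [LinearOrder K] {B : Set (K → Y)}
    (hB : KCompact K B) {i b : K} (hib : i < b) : #(Function.eval i '' B) < #K := by
  set U : Y → Set (K → Y) := fun c => {x | x i = c}
  have hU : Function.Injective U := fun c c' h => (h ▸ rfl : (fun _ => c) ∈ U c')
  obtain ⟨𝒱, h𝒱U, h𝒱, hB𝒱⟩ :=
    hB (range U) (by rintro _ ⟨c, rfl⟩; exact isOpen_bTop_eval_eq hib c)
      fun x _ => ⟨U (x i), mem_range_self _, rfl⟩
  have himage : Function.eval i '' B ⊆ U ⁻¹' 𝒱 := by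
    rintro _ ⟨x, hx, rfl⟩
    obtain ⟨V, hV, hxV⟩ := hB𝒱 hx
    obtain ⟨c, rfl⟩ := h𝒱U hV
    rwa [← show x i = c from hxV] at hV
  exact (mk_le_mk_of_subset himage).trans_lt ((mk_preimage_of_injective U 𝒱 hU).trans_lt h𝒱)

theorem bounded_of_subset_kCompact_general (K : Type u) [LinearOrder K]
    (hseg : ∀ b : K, #(Set.Iio b) < #K)
    (hunc : ℵ₀ < #K) (hpow : Cardinal.powerlt #K #K = #K)
    (A B : Set (K → K)) (hB : KCompact K B) (hAB : A ⊆ B) :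
    BddSet K A := by
  have hreg := isRegular_of_powerlt_self_s5 hunc.le hpow
  have hnomax (i : K) : ∃ b, i < b := by
    simpa using exists_forall_lt_of_mk_lt hreg hseg (S := {i}) (by simpa using hreg.nat_lt 1)
  choose ub hub using fun i =>
    exists_forall_lt_of_mk_lt hreg hseg (hB.mk_image_eval_lt (hnomax i).choose_spec)
  exact ⟨ub, fun y hy i => (hub i (y i) ⟨y, hAB hy, rfl⟩).le⟩

/-- A subset of a κ-compact subset of `K → K` is bounded. -/
theorem bounded_of_subset_kCompact (K : Type u) [LinearOrder K] [WellFoundedLT K]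
    (hseg : ∀ b : K, #(Set.Iio b) < #K)
    (hunc : ℵ₀ < #K) (hpow : Cardinal.powerlt #K #K = #K)
    (A B : Set (K → K)) (hB : KCompact K B) (hAB : A ⊆ B) :
    BddSet K A :=
  bounded_of_subset_kCompact_general K hseg hunc hpow A B hB hAB
end

section
/- Let κ be an uncountable cardinal with κ = κ^{<κ} that is not weakly compact, and assume every closed subset of κ^κ has the κ-perfect set property. Then a subset A of κ^κ is contained in a K_κ subset of κ^κ if and only if A has cardinality at most κ. -/
open Cardinal Set Topology

universe u

set_option linter.unusedSectionVars false
section AuxLemmas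

variable {K : Type u} [LinearOrder K] [WellFoundedLT K]

lemma aux_regular (hunc : ℵ₀ < #K) (hpow : Cardinal.powerlt #K #K = #K) :
    (#K).IsRegular := by
  refine ⟨hunc.le, ?_⟩
  by_contra h
  have h' : (#K).ord.cof < #K := lt_of_not_ge h
  have h1 := Cardinal.lt_power_cof (c := #K) hunc.le
  have h2 : (#K) ^ (#K).ord.cof ≤ #K := by
    calc (#K) ^ (#K).ord.cof ≤ Cardinal.powerlt #K #K := Cardinal.le_powerlt _ h'
    _ = #K := hpow
  exact absurd (h1.trans_le h2) (lt_irrefl _)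

lemma aux_Iic_lt (hseg : ∀ b : K, #(Set.Iio b) < #K) (hunc : ℵ₀ < #K) (b : K) :
    #(Set.Iic b) < #K := by
  have h1 : #(Set.Iic b) ≤ #(Set.Iio b) + 1 := by
    rw [← Set.Iio_union_right]
    exact (Cardinal.mk_union_le _ _).trans (by rw [Cardinal.mk_singleton])
  exact h1.trans_lt (Cardinal.add_lt_of_lt hunc.le (hseg b)
    (Cardinal.one_lt_aleph0.trans hunc))

lemma aux_no_max (hseg : ∀ b : K, #(Set.Iio b) < #K) (hunc : ℵ₀ < #K) (b : K) :
    ∃ c, b < c := by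
  by_contra h
  push_neg at h
  have hsub : (Set.univ : Set K) ⊆ Set.Iic b := fun x _ => h x
  have h1 : #K ≤ #(Set.Iic b) := by
    calc #K = #(Set.univ : Set K) := (Cardinal.mk_univ (α := K)).symm
    _ ≤ #(Set.Iic b) := Cardinal.mk_le_mk_of_subset hsub
  exact absurd (h1.trans_lt (aux_Iic_lt hseg hunc b)) (lt_irrefl _)

lemma aux_bounded (hseg : ∀ b : K, #(Set.Iio b) < #K) (hunc : ℵ₀ < #K)
    (hpow : Cardinal.powerlt #K #K = #K) (S : Set K) (hS : #S < #K) :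
    ∃ β : K, ∀ s ∈ S, s < β := by
  by_contra h
  push_neg at h
  have hcov : (Set.univ : Set K) ⊆ ⋃ s : S, Set.Iic s.1 := by
    intro x _
    obtain ⟨s, hs, hxs⟩ := h x
    exact Set.mem_iUnion.2 ⟨⟨s, hs⟩, hxs⟩
  have h1 : #K ≤ Cardinal.sum fun s : S => #(Set.Iic s.1) := by
    calc #K = #(Set.univ : Set K) := (Cardinal.mk_univ (α := K)).symm
    _ ≤ #(⋃ s : S, Set.Iic s.1) := Cardinal.mk_le_mk_of_subset hcov
    _ ≤ Cardinal.sum fun s : S => #(Set.Iic s.1) := Cardinal.mk_iUnion_le_sum_mk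
  have h2 : (Cardinal.sum fun s : S => #(Set.Iic s.1)) < #K :=
    Cardinal.sum_lt_of_isRegular (aux_regular hunc hpow) hS
      fun s => aux_Iic_lt hseg hunc s.1
  exact absurd (h1.trans_lt h2) (lt_irrefl _)

lemma aux_gen_open {Y : Type u} (b : K) (s : K → Y) :
    IsOpen[bTop K Y] {x | ∀ i, i < b → x i = s i} :=
  TopologicalSpace.isOpen_generateFrom_of_mem ⟨b, s, rfl⟩

lemma aux_det_open {Y : Type u} (F : Set (K → Y)) (β : K)
    (h : ∀ z w : K → Y, (∀ i, i < β → z i = w i) → z ∈ F → w ∈ F) :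
    IsOpen[bTop K Y] F := by
  letI := bTop K Y
  have hF : F = ⋃ s ∈ F, {x | ∀ i, i < β → x i = s i} := by
    ext x
    constructor
    · intro hx
      exact Set.mem_biUnion hx (fun i _ => rfl)
    · intro hx
      obtain ⟨s, hs, hxs⟩ := Set.mem_iUnion₂.1 hx
      exact h s x (fun i hi => (hxs i hi).symm) hs
  rw [hF]
  exact isOpen_biUnion fun s _ => aux_gen_open β s

end AuxLemmas
section AuxLemmas2
set_option linter.unusedSectionVars false

variable {K : Type u} [LinearOrder K] [WellFoundedLT K]

lemma aux_kcompact_closed (hseg : ∀ b : K, #(Set.Iio b) < #K) (hunc : ℵ₀ < #K)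
    (hpow : Cardinal.powerlt #K #K = #K) (C : Set (K → K)) (hC : KCompact K C) :
    IsClosed[bTop K K] C := by
  classical
  letI := bTop K K
  rw [← isOpen_compl_iff]
  have key : ∀ x ∉ C, ∃ W : Set (K → K), IsOpen W ∧ x ∈ W ∧ W ∩ C = ∅ := by
    intro x hx
    set 𝒰 : Set (Set (K → K)) :=
      {U | ∃ (β : K) (s : K → K), U = {z | ∀ i, i < β → z i = s i} ∧ x ∉ U} with h𝒰
    have hopen : ∀ U ∈ 𝒰, IsOpen U := by
      rintro U ⟨β, s, rfl, -⟩
      exact aux_gen_open β s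
    have hcov : C ⊆ ⋃₀ 𝒰 := by
      intro y hy
      have hyx : y ≠ x := fun h => hx (h ▸ hy)
      obtain ⟨i, hi⟩ : ∃ i, y i ≠ x i := by
        by_contra h
        push_neg at h
        exact hyx (funext h)
      obtain ⟨β, hβ⟩ := aux_no_max hseg hunc i
      refine Set.mem_sUnion.2 ⟨{z | ∀ j, j < β → z j = y j}, ⟨β, y, rfl, ?_⟩,
        fun j _ => rfl⟩
      intro hxU
      exact hi ((hxU i hβ).symm)
    obtain ⟨𝒱, h𝒱𝒰, h𝒱card, h𝒱cov⟩ := hC 𝒰 hopen hcov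
    have hmem : ∀ V : 𝒱, ∃ (β : K) (s : K → K), (V : Set (K → K)) = {z | ∀ i, i < β → z i = s i} ∧
        x ∉ (V : Set (K → K)) := fun V => h𝒱𝒰 V.2
    choose βf sf hVeq hVx using hmem
    have hrange : #(Set.range βf) < #K := Cardinal.mk_range_le.trans_lt h𝒱card
    obtain ⟨γ, hγ⟩ := aux_bounded hseg hunc hpow (Set.range βf) hrange
    refine ⟨{z | ∀ i, i < γ → z i = x i}, aux_gen_open γ x, fun i _ => rfl, ?_⟩
    rw [Set.eq_empty_iff_forall_notMem]
    rintro z ⟨hzW, hzC⟩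
    obtain ⟨V, hV, hzV⟩ := h𝒱cov hzC
    apply hVx ⟨V, hV⟩
    rw [hVeq ⟨V, hV⟩]
    intro i hi
    have h1 : z i = sf ⟨V, hV⟩ i := by
      have hzV' : z ∈ ((⟨V, hV⟩ : 𝒱) : Set (K → K)) := hzV
      rw [hVeq ⟨V, hV⟩] at hzV'
      exact hzV' i hi
    have h2 : z i = x i := hzW i (hi.trans (hγ _ ⟨⟨V, hV⟩, rfl⟩))
    rw [← h2, h1]
  choose W hWo hWx hWd using key
  have hCc : Cᶜ = ⋃ x, ⋃ hx : x ∉ C, W x hx := by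
    ext y
    simp only [Set.mem_iUnion, Set.mem_compl_iff]
    constructor
    · intro hy
      exact ⟨y, hy, hWx y hy⟩
    · rintro ⟨x, hx, hyW⟩ hyC
      have hmem : y ∈ W x hx ∩ C := ⟨hyW, hyC⟩
      rw [hWd x hx] at hmem
      exact hmem
  rw [hCc]
  exact isOpen_iUnion fun x => isOpen_iUnion fun hx => hWo x hx

lemma aux_kcompact_subset (C C' : Set (K → K)) (hC : KCompact K C) (hsub : C' ⊆ C)
    (hcl : IsClosed[bTop K K] C') : KCompact K C' := by
  letI := bTop K K
  intro 𝒰 hop hcov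
  have hop' : ∀ U ∈ insert C'ᶜ 𝒰, IsOpen U := by
    rintro U hU
    rcases Set.mem_insert_iff.1 hU with rfl | hU
    · exact hcl.isOpen_compl
    · exact hop U hU
  have hcov' : C ⊆ ⋃₀ insert C'ᶜ 𝒰 := by
    intro y hy
    by_cases h : y ∈ C'
    · obtain ⟨U, hU, hyU⟩ := hcov h
      exact ⟨U, Set.mem_insert_of_mem _ hU, hyU⟩
    · exact ⟨C'ᶜ, Set.mem_insert _ _, h⟩
  obtain ⟨𝒱₀, h1, h2, h3⟩ := hC (insert C'ᶜ 𝒰) hop' hcov'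
  refine ⟨𝒱₀ ∩ 𝒰, Set.inter_subset_right,
      (Cardinal.mk_le_mk_of_subset Set.inter_subset_left).trans_lt h2, ?_⟩
  intro y hy
  obtain ⟨V, hV, hyV⟩ := h3 (hsub hy)
  rcases Set.mem_insert_iff.1 (h1 hV) with hV' | hV'
  · rw [hV'] at hyV
    exact absurd hy hyV
  · exact ⟨V, ⟨hV, hV'⟩, hyV⟩

lemma aux_kcompact_singleton (hunc : ℵ₀ < #K) (x : K → K) :
    KCompact K ({x} : Set (K → K)) := by
  intro 𝒰 _ hcov
  obtain ⟨U, hU, hxU⟩ := hcov (Set.mem_singleton x)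
  refine ⟨{U}, Set.singleton_subset_iff.2 hU, ?_, ?_⟩
  · rw [Cardinal.mk_singleton]
    exact Cardinal.one_lt_aleph0.trans hunc
  · intro y hy
    rw [Set.mem_singleton_iff] at hy
    exact ⟨U, Set.mem_singleton U, hy ▸ hxU⟩

lemma aux_kcompact_empty (hunc : ℵ₀ < #K) : KCompact K (∅ : Set (K → K)) := by
  intro 𝒰 _ _
  refine ⟨∅, Set.empty_subset _, ?_, Set.empty_subset _⟩
  rw [Cardinal.mk_emptyCollection]
  exact Cardinal.aleph0_pos.trans hunc

lemma aux_transfer (C' : Set (K → K)) (hC : KCompact K C') (hh : HomeoToCantor K C') :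
    KCompact K (Set.univ : Set (K → ULift.{u} Bool)) := by
  classical
  letI := bTop K K
  letI : TopologicalSpace (K → ULift.{u} Bool) := bTop K (ULift.{u} Bool)
  obtain ⟨h⟩ := hh
  intro 𝒰 hop hcov
  have key : ∀ U : Set (K → ULift.{u} Bool), ∃ V : Set (K → K),
      U ∈ 𝒰 → IsOpen V ∧ (Subtype.val ⁻¹' V : Set C') = h ⁻¹' U := by
    intro U
    by_cases hU : U ∈ 𝒰
    · have hop' : IsOpen (h ⁻¹' U) := (hop U hU).preimage h.continuous
      rw [isOpen_induced_iff] at hop'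
      obtain ⟨V, hVo, hVeq⟩ := hop'
      exact ⟨V, fun _ => ⟨hVo, hVeq⟩⟩
    · exact ⟨∅, fun hc => absurd hc hU⟩
  choose f hf using key
  have hop2 : ∀ V ∈ {V | ∃ U ∈ 𝒰, V = f U}, IsOpen V := by
    rintro V ⟨U, hU, rfl⟩
    exact (hf U hU).1
  have hcov2 : C' ⊆ ⋃₀ {V | ∃ U ∈ 𝒰, V = f U} := by
    intro x hx
    obtain ⟨U, hU, hxU⟩ := hcov (Set.mem_univ (h ⟨x, hx⟩))
    refine ⟨f U, ⟨U, hU, rfl⟩, ?_⟩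
    have hmem0 : (⟨x, hx⟩ : C') ∈ (Subtype.val ⁻¹' (f U) : Set C') := by
      rw [(hf U hU).2]
      exact hxU
    exact hmem0
  obtain ⟨𝒱', h1, h2, h3⟩ := hC {V | ∃ U ∈ 𝒰, V = f U} hop2 hcov2
  have pick : ∀ V : 𝒱', ∃ U ∈ 𝒰, (V : Set (K → K)) = f U := fun V => h1 V.2
  choose g hg1 hg2 using pick
  refine ⟨Set.range g, ?_, Cardinal.mk_range_le.trans_lt h2, ?_⟩
  · rintro U ⟨V, rfl⟩
    exact hg1 V
  · intro y _
    have hx : (h.symm y : K → K) ∈ ⋃₀ 𝒱' := h3 (h.symm y).2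
    obtain ⟨V, hV, hyV⟩ := hx
    refine ⟨g ⟨V, hV⟩, ⟨⟨V, hV⟩, rfl⟩, ?_⟩
    have hVeq := hg2 ⟨V, hV⟩
    have hmem : h.symm y ∈ (Subtype.val ⁻¹' (f (g ⟨V, hV⟩)) : Set C') := by
      rw [← hVeq]
      exact hyV
    rw [(hf _ (hg1 ⟨V, hV⟩)).2] at hmem
    have := h.apply_symm_apply y
    rw [← this]
    exact hmem

end AuxLemmas2
section AuxLemmas3
set_option linter.unusedSectionVars false

variable {K : Type u} [LinearOrder K] [WellFoundedLT K]

lemma aux_card_realize (x : Cardinal.{u}) (hx : x < #K) :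
    ∃ b : K, #(Set.Iio b) = x := by
  have hlt : x.ord < Ordinal.type ((· < ·) : K → K → Prop) := by
    by_contra h
    push_neg at h
    have h1 := Ordinal.card_le_card h
    rw [Ordinal.card_type, Cardinal.card_ord] at h1
    exact absurd (h1.trans_lt hx) (lt_irrefl _)
  obtain ⟨b, hb⟩ := Ordinal.typein_surj ((· < ·) : K → K → Prop) hlt
  refine ⟨b, ?_⟩
  have h2 : #(Set.Iio b) = #{y // y < b} := rfl
  rw [h2, ← Ordinal.card_typein (r := ((· < ·) : K → K → Prop)) b]
  exact (congrArg Ordinal.card hb).trans (Cardinal.card_ord x)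

lemma aux_strong_limit (hseg : ∀ b : K, #(Set.Iio b) < #K) (hunc : ℵ₀ < #K)
    (hcomp : KCompact K (Set.univ : Set (K → ULift.{u} Bool))) :
    Cardinal.IsStrongLimit (#K) := by
  classical
  constructor
  · exact fun h => absurd (h ▸ hunc) (by simp)
  intro x hx
  obtain ⟨b, hb⟩ := aux_card_realize x hx
  have hcard : (2 : Cardinal.{u}) ^ x = #(↥(Set.Iio b) → ULift.{u} Bool) := by
    rw [← hb, ← Cardinal.power_def]
    congr 1
    simp
  rw [hcard]
  letI : TopologicalSpace (K → ULift.{u} Bool) := bTop K (ULift.{u} Bool)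
  set 𝒰 : Set (Set (K → ULift.{u} Bool)) :=
    {U | ∃ s : K → ULift.{u} Bool, U = {z | ∀ i, i < b → z i = s i}} with h𝒰
  have hopen : ∀ U ∈ 𝒰, IsOpen U := by
    rintro U ⟨s, rfl⟩
    exact aux_gen_open b s
  have hcov : (Set.univ : Set (K → ULift.{u} Bool)) ⊆ ⋃₀ 𝒰 := by
    intro z _
    exact ⟨{w | ∀ i, i < b → w i = z i}, ⟨z, rfl⟩, fun i _ => rfl⟩
  obtain ⟨𝒱, h1, h2, h3⟩ := hcomp 𝒰 hopen hcov
  have hext : ∀ t : ↥(Set.Iio b) → ULift.{u} Bool, ∃ V ∈ 𝒱,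
      (fun i : K => if h : i < b then t ⟨i, h⟩ else ULift.up false) ∈ V :=
    fun t => h3 (Set.mem_univ _)
  choose Vf hVf1 hVf2 using hext
  have hmem : ∀ V : 𝒱, ∃ s : K → ULift.{u} Bool,
      (V : Set (K → ULift.{u} Bool)) = {z | ∀ i, i < b → z i = s i} :=
    fun V => h1 V.2
  choose sf hsf using hmem
  have hinj : Function.Injective
      (fun t : ↥(Set.Iio b) → ULift.{u} Bool => (⟨Vf t, hVf1 t⟩ : 𝒱)) := by
    intro t t' he
    have key : ∀ (t : ↥(Set.Iio b) → ULift.{u} Bool) (i : ↥(Set.Iio b)),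
        t i = sf ⟨Vf t, hVf1 t⟩ i.1 := by
      intro t i
      have h4 := hVf2 t
      have h5 : (fun j : K => if h : j < b then t ⟨j, h⟩ else ULift.up false) ∈
          ((⟨Vf t, hVf1 t⟩ : 𝒱) : Set (K → ULift.{u} Bool)) := h4
      rw [hsf ⟨Vf t, hVf1 t⟩] at h5
      have h6 := h5 i.1 i.2
      refine Eq.trans ?_ h6
      show t i = dite ((i : K) < b) (fun h => t ⟨i.1, h⟩) (fun _ => ULift.up false)
      exact (dif_pos (show (i : K) < b from i.2)
        (t := fun h => t ⟨i.1, h⟩) (e := fun _ => ULift.up false)).symm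
    funext i
    have he' : (⟨Vf t, hVf1 t⟩ : 𝒱) = ⟨Vf t', hVf1 t'⟩ := he
    rw [key t i, key t' i, he']
  exact (Cardinal.mk_le_of_injective hinj).trans_lt h2
section AuxLemmas4
set_option linter.unusedSectionVars false

variable {K : Type u} [LinearOrder K] [WellFoundedLT K]

lemma aux_ndRes_self (p : Nd K K) : ndRes K p p.1 le_rfl = p := rfl

lemma aux_snd_congr {b : K} {f g : ↥(Set.Iio b) → K}
    (h : (⟨b, f⟩ : Nd K K) = ⟨b, g⟩) : f = g := by
  injection h

lemma aux_nu (hseg : ∀ b : K, #(Set.Iio b) < #K) (hunc : ℵ₀ < #K)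
    (hpow : Cardinal.powerlt #K #K = #K) :
    ∃ ν : Nd K K → K, Function.Injective ν := by
  have h1 : #(Nd K K) ≤ #K := by
    have he : #(Nd K K) = Cardinal.sum fun b : K => #(↥(Set.Iio b) → K) :=
      Cardinal.mk_sigma _
    rw [he]
    calc Cardinal.sum (fun b : K => #(↥(Set.Iio b) → K))
        ≤ Cardinal.sum (fun _ : K => #K) := by
          refine Cardinal.sum_le_sum _ _ fun b => ?_
          rw [← Cardinal.power_def]
          exact (Cardinal.le_powerlt _ (hseg b)).trans hpow.le
      _ = #K * #K := Cardinal.sum_const' _ _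
      _ = #K := Cardinal.mul_eq_self hunc.le
  obtain ⟨e⟩ := (Cardinal.le_def _ _).1 h1
  exact ⟨e, e.injective⟩

lemma aux_nodes_le_small (hseg : ∀ b : K, #(Set.Iio b) < #K) (hunc : ℵ₀ < #K)
    (hpow : Cardinal.powerlt #K #K = #K) (T : Set (Nd K K))
    (hlev : ∀ b : K, #{t : ↥(Set.Iio b) → K | (⟨b, t⟩ : Nd K K) ∈ T} < #K) (b : K) :
    #{p : Nd K K | p ∈ T ∧ p.1 ≤ b} < #K := by
  have hreg := aux_regular hunc hpow
  set Z := Σ c : ↥(Set.Iic b), {t : ↥(Set.Iio c.1) → K | (⟨c.1, t⟩ : Nd K K) ∈ T} with hZ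
  have hf : ∃ f : {p : Nd K K | p ∈ T ∧ p.1 ≤ b} → Z, Function.Injective f := by
    refine ⟨fun p => ⟨⟨p.1.1, p.2.2⟩, ⟨p.1.2, p.2.1⟩⟩, ?_⟩
    intro p q hpq
    exact Subtype.ext (congrArg (fun x : Z => (⟨x.1.1, x.2.1⟩ : Nd K K)) hpq)
  obtain ⟨f, hfinj⟩ := hf
  have h2 : #{p : Nd K K | p ∈ T ∧ p.1 ≤ b} ≤ #Z := Cardinal.mk_le_of_injective hfinj
  have h3 : #Z < #K := by
    rw [hZ, Cardinal.mk_sigma]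
    exact Cardinal.sum_lt_of_isRegular hreg (aux_Iic_lt hseg hunc b)
      fun c => hlev c.1
  exact h2.trans_lt h3

def auxF (ν : Nd K K → K) (T : Set (Nd K K)) (b : K) : Set (K → ULift.{u} Bool) :=
  {z | ∃ t : ↥(Set.Iio b) → K, (⟨b, t⟩ : Nd K K) ∈ T ∧
    ∀ c, ∀ h : c ≤ b, z (ν (ndRes K ⟨b, t⟩ c h)) = ULift.up true}

def auxG (ν : Nd K K → K) (p q : Nd K K) : Set (K → ULift.{u} Bool) :=
  {z | ¬(z (ν p) = ULift.up true ∧ z (ν q) = ULift.up true)}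

open Classical in
noncomputable def auxZ (β₀ : K) (t0 : ↥(Set.Iio β₀) → K) (ν : Nd K K → K) :
    K → ULift.{u} Bool :=
  fun k => if (∃ c : K, ∃ h : c ≤ β₀, ν (ndRes K (⟨β₀, t0⟩ : Nd K K) c h) = k)
    then ULift.up true else ULift.up false

lemma aux_clopen_of_det {Y : Type u} (F : Set (K → Y)) (β : K)
    (h : ∀ z w : K → Y, (∀ i, i < β → z i = w i) → (z ∈ F ↔ w ∈ F)) :
    IsOpen[bTop K Y] F ∧ IsOpen[bTop K Y] Fᶜ :=
  ⟨aux_det_open F β (fun z w hzw hz => (h z w hzw).1 hz),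
   aux_det_open Fᶜ β (fun z w hzw hz hw => hz ((h z w hzw).2 hw))⟩

lemma auxF_det (hseg : ∀ b : K, #(Set.Iio b) < #K) (hunc : ℵ₀ < #K)
    (hpow : Cardinal.powerlt #K #K = #K) (ν : Nd K K → K) (T : Set (Nd K K))
    (hsub : IsSubtree K T)
    (hlev : ∀ b : K, #{t : ↥(Set.Iio b) → K | (⟨b, t⟩ : Nd K K) ∈ T} < #K) (b : K) :
    ∃ β : K, ∀ z w : K → ULift.{u} Bool, (∀ i, i < β → z i = w i) →
      (z ∈ auxF ν T b ↔ w ∈ auxF ν T b) := by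
  obtain ⟨β, hβ⟩ := aux_bounded hseg hunc hpow (ν '' {p : Nd K K | p ∈ T ∧ p.1 ≤ b})
    (Cardinal.mk_image_le.trans_lt (aux_nodes_le_small hseg hunc hpow T hlev b))
  refine ⟨β, ?_⟩
  have key : ∀ z w : K → ULift.{u} Bool, (∀ i, i < β → z i = w i) →
      z ∈ auxF ν T b → w ∈ auxF ν T b := by
    rintro z w hzw ⟨t, ht, hmark⟩
    refine ⟨t, ht, fun c h => ?_⟩
    rw [← hzw _ (hβ _ ⟨ndRes K ⟨b, t⟩ c h, ⟨hsub _ ht c h, h⟩, rfl⟩)]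
    exact hmark c h
  intro z w hzw
  exact ⟨key z w hzw, key w z (fun i hi => (hzw i hi).symm)⟩

lemma aux_treeprop (hseg : ∀ b : K, #(Set.Iio b) < #K) (hunc : ℵ₀ < #K)
    (hpow : Cardinal.powerlt #K #K = #K)
    (hcomp : KCompact K (Set.univ : Set (K → ULift.{u} Bool))) : TreeProp K := by
  classical
  intro T hsubT hKT
  obtain ⟨ν, hν⟩ := aux_nu hseg hunc hpow
  have hlev : ∀ b : K, #{t : ↥(Set.Iio b) → K | (⟨b, t⟩ : Nd K K) ∈ T} < #K := hKT.2
  have hzex : ∃ z : K → ULift.{u} Bool, (∀ b, z ∈ auxF ν T b) ∧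
      (∀ p q : Nd K K, p ∈ T → q ∈ T → p.1 = q.1 → p ≠ q → z ∈ auxG ν p q) := by
    by_contra hne
    letI : TopologicalSpace (K → ULift.{u} Bool) := bTop K (ULift.{u} Bool)
    set 𝒰 : Set (Set (K → ULift.{u} Bool)) :=
      {U | (∃ b : K, U = (auxF ν T b)ᶜ) ∨
        ∃ p q : Nd K K, p ∈ T ∧ q ∈ T ∧ p.1 = q.1 ∧ p ≠ q ∧ U = (auxG ν p q)ᶜ} with h𝒰
    have hopen : ∀ U ∈ 𝒰, IsOpen U := by
      rintro U (⟨b, rfl⟩ | ⟨p, q, hp, hq, hpq, hne', rfl⟩)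
      · obtain ⟨β, hβ⟩ := auxF_det hseg hunc hpow ν T hsubT hlev b
        exact (aux_clopen_of_det _ β hβ).2
      · obtain ⟨β, hβ⟩ := aux_no_max hseg hunc (max (ν p) (ν q))
        refine (aux_clopen_of_det (auxG ν p q) β ?_).2
        intro z w hzw
        have e1 : z (ν p) = w (ν p) := hzw _ ((le_max_left _ _).trans_lt hβ)
        have e2 : z (ν q) = w (ν q) := hzw _ ((le_max_right _ _).trans_lt hβ)
        simp only [auxG, Set.mem_setOf_eq, e1, e2]
    have hcov : (Set.univ : Set (K → ULift.{u} Bool)) ⊆ ⋃₀ 𝒰 := by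
      intro z _
      by_cases hF : ∀ b, z ∈ auxF ν T b
      · have hG : ¬ ∀ p q : Nd K K, p ∈ T → q ∈ T → p.1 = q.1 → p ≠ q →
            z ∈ auxG ν p q := fun hG => hne ⟨z, hF, hG⟩
        push_neg at hG
        obtain ⟨p, q, hp, hq, hpq, hne', hz⟩ := hG
        exact ⟨(auxG ν p q)ᶜ, Or.inr ⟨p, q, hp, hq, hpq, hne', rfl⟩, hz⟩
      · push_neg at hF
        obtain ⟨b, hb⟩ := hF
        exact ⟨(auxF ν T b)ᶜ, Or.inl ⟨b, rfl⟩, hb⟩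
    obtain ⟨𝒱, h1, h2, h3⟩ := hcomp 𝒰 hopen hcov
    have hKne : Nonempty K :=
      Cardinal.mk_ne_zero_iff.1 (ne_of_gt (lt_trans Cardinal.aleph0_pos hunc))
    obtain ⟨k0⟩ := hKne
    set fidx : ↥𝒱 → K := fun V =>
      if h : ∃ b : K, (V : Set (K → ULift.{u} Bool)) = (auxF ν T b)ᶜ then h.choose
      else k0 with hfidx
    have hrange : #(Set.range fidx) < #K := Cardinal.mk_range_le.trans_lt h2
    obtain ⟨β₀, hβ₀⟩ := aux_bounded hseg hunc hpow _ hrange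
    obtain ⟨t0, ht0⟩ := hKT.1 β₀
    have hz0F : ∀ b, b ≤ β₀ → auxZ β₀ t0 ν ∈ auxF ν T b := by
      intro b hb
      refine ⟨(ndRes K (⟨β₀, t0⟩ : Nd K K) b hb).2, hsubT _ ht0 b hb, ?_⟩
      intro c h
      show auxZ β₀ t0 ν
        (ν (ndRes K (⟨β₀, t0⟩ : Nd K K) c (h.trans hb))) = ULift.up true
      unfold auxZ
      exact if_pos ⟨c, h.trans hb, rfl⟩
    have hz0G : ∀ p q : Nd K K, p ∈ T → q ∈ T → p.1 = q.1 → p ≠ q →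
        auxZ β₀ t0 ν ∈ auxG ν p q := by
      rintro p q hp hq hpq hne' ⟨e1, e2⟩
      unfold auxZ at e1 e2
      have c1 : ∃ c : K, ∃ h : c ≤ β₀, ν (ndRes K (⟨β₀, t0⟩ : Nd K K) c h) = ν p := by
        by_contra hcc
        rw [if_neg hcc] at e1
        exact absurd e1 (by simp)
      have c2 : ∃ c : K, ∃ h : c ≤ β₀, ν (ndRes K (⟨β₀, t0⟩ : Nd K K) c h) = ν q := by
        by_contra hcc
        rw [if_neg hcc] at e2
        exact absurd e2 (by simp)
      obtain ⟨c, hc, ec⟩ := c1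
      obtain ⟨c', hc', ec'⟩ := c2
      have hp' : ndRes K (⟨β₀, t0⟩ : Nd K K) c hc = p := hν ec
      have hq' : ndRes K (⟨β₀, t0⟩ : Nd K K) c' hc' = q := hν ec'
      have hcc' : c = c' := by
        rw [← hp', ← hq'] at hpq
        exact hpq
      subst hcc'
      exact hne' (hp'.symm.trans hq')
    obtain ⟨V, hV, hz0V⟩ := h3 (Set.mem_univ (auxZ β₀ t0 ν))
    rcases h1 hV with ⟨b, hVF⟩ | ⟨p, q, hp, hq, hpq, hne', hVG⟩
    · have hex : ∃ b : K, (V : Set (K → ULift.{u} Bool)) = (auxF ν T b)ᶜ := ⟨b, hVF⟩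
      have hfeq : V = (auxF ν T (fidx ⟨V, hV⟩))ᶜ := by
        have : fidx ⟨V, hV⟩ = hex.choose := by
          rw [hfidx]
          exact dif_pos hex
        rw [this]
        exact hex.choose_spec
      have hble : fidx ⟨V, hV⟩ < β₀ := hβ₀ _ ⟨⟨V, hV⟩, rfl⟩
      rw [hfeq] at hz0V
      exact hz0V (hz0F _ hble.le)
    · rw [hVG] at hz0V
      exact hz0V (hz0G p q hp hq hpq hne')
  obtain ⟨z, hzF, hzG⟩ := hzex
  choose tf htf1 htf2 using hzF
  have hco : ∀ b c : K, ∀ h : c ≤ b, ndRes K ⟨b, tf b⟩ c h = (⟨c, tf c⟩ : Nd K K) := by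
    intro b c h
    by_contra hne'
    have h1' : ndRes K ⟨b, tf b⟩ c h ∈ T := hsubT _ (htf1 b) c h
    have hmark1 : z (ν (ndRes K ⟨b, tf b⟩ c h)) = ULift.up true := htf2 b c h
    have hmark2 : z (ν (⟨c, tf c⟩ : Nd K K)) = ULift.up true := by
      have h5 := htf2 c c le_rfl
      rwa [aux_ndRes_self (⟨c, tf c⟩ : Nd K K)] at h5
    exact hzG _ _ h1' (htf1 c) rfl hne' ⟨hmark1, hmark2⟩
  choose su hsu using fun i : K => aux_no_max hseg hunc i
  refine ⟨fun i => tf (su i) ⟨i, hsu i⟩, ?_⟩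
  intro b
  have hsnd : ∀ i : ↥(Set.Iio b), tf (su i.1) ⟨i.1, hsu i.1⟩ = tf b i := by
    intro i
    rcases le_total b (su i.1) with hm | hm
    · have e' : (⟨b, fun j : ↥(Set.Iio b) =>
          tf (su i.1) ⟨j.1, lt_of_lt_of_le j.2 hm⟩⟩ : Nd K K) = ⟨b, tf b⟩ :=
        hco (su i.1) b hm
      exact congrFun (aux_snd_congr e') i
    · have e' : (⟨su i.1, fun j : ↥(Set.Iio (su i.1)) =>
          tf b ⟨j.1, lt_of_lt_of_le j.2 hm⟩⟩ : Nd K K) = ⟨su i.1, tf (su i.1)⟩ :=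
        hco b (su i.1) hm
      exact (congrFun (aux_snd_congr e') ⟨i.1, hsu i.1⟩).symm
  have hx : xRes K (fun i => tf (su i) ⟨i, hsu i⟩) b = (⟨b, tf b⟩ : Nd K K) := by
    show (⟨b, fun i : ↥(Set.Iio b) => tf (su i.1) ⟨i.1, hsu i.1⟩⟩ : Nd K K) = ⟨b, tf b⟩
    exact congrArg (fun t => (⟨b, t⟩ : Nd K K)) (funext hsnd)
  show xRes K (fun i => tf (su i) ⟨i, hsu i⟩) b ∈ T
  rw [hx]
  exact htf1 b

end AuxLemmas4
/-- If `K` is not weakly compact and all closed sets have the κ-perfect set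
property, then `A` is contained in a `K_κ` set iff `#A ≤ #K`. -/
theorem psp_characterization_of_KK (K : Type u) [LinearOrder K] [WellFoundedLT K]
    (hseg : ∀ b : K, #(Set.Iio b) < #K)
    (hunc : ℵ₀ < #K) (hpow : Cardinal.powerlt #K #K = #K)
    (hnwc : ¬ WComp K)
    (hPSP : ∀ C : Set (K → K), IsClosed[bTop K K] C → PSP K C)
    (A : Set (K → K)) :
    (∃ B, IsKK K B ∧ A ⊆ B) ↔ #A ≤ #K := by
  classical
  constructor
  · rintro ⟨B, ⟨Cf, hCf, rfl⟩, hAB⟩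
    by_contra hA
    push_neg at hA
    have hpiece : ∃ b, #K < #(A ∩ Cf b : Set (K → K)) := by
      by_contra h
      push_neg at h
      have hsub : A ⊆ ⋃ b, (A ∩ Cf b) := by
        intro x hx
        obtain ⟨U, ⟨b, rfl⟩, hxb⟩ := hAB hx
        exact Set.mem_iUnion.2 ⟨b, hx, hxb⟩
      have hle : #A ≤ #K := by
        calc #A ≤ #(⋃ b, (A ∩ Cf b) : Set (K → K)) := Cardinal.mk_le_mk_of_subset hsub
        _ ≤ Cardinal.sum (fun b => #(A ∩ Cf b : Set (K → K))) :=
            Cardinal.mk_iUnion_le_sum_mk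
        _ ≤ Cardinal.sum (fun _ : K => #K) := Cardinal.sum_le_sum _ _ h
        _ = #K * #K := Cardinal.sum_const' _ _
        _ = #K := Cardinal.mul_eq_self hunc.le
      exact absurd hle (not_le.2 hA)
    obtain ⟨b0, hb0⟩ := hpiece
    letI := bTop K K
    have hCcl : IsClosed (Cf b0) := aux_kcompact_closed hseg hunc hpow _ (hCf b0)
    have hDcl : IsClosed (closure (A ∩ Cf b0)) := isClosed_closure
    have hDC : closure (A ∩ Cf b0) ⊆ Cf b0 :=
      closure_minimal Set.inter_subset_right hCcl
    have hD : ¬ #(closure (A ∩ Cf b0)) ≤ #K := fun h =>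
      absurd ((Cardinal.mk_le_mk_of_subset subset_closure).trans h) (not_le.2 hb0)
    rcases hPSP _ hDcl with h | ⟨C', hC'D, hC'cl, hC'hom⟩
    · exact hD h
    have hC'k : KCompact K C' :=
      aux_kcompact_subset _ _ (hCf b0) (hC'D.trans hDC) hC'cl
    have hcant := aux_transfer C' hC'k hC'hom
    exact hnwc ⟨⟨hunc, (aux_regular hunc hpow).2, (aux_strong_limit hseg hunc hcant).isStrongPrelimit⟩,
      aux_treeprop hseg hunc hpow hcant⟩
  · intro hA
    rcases Set.eq_empty_or_nonempty A with rfl | ⟨a0, ha0⟩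
    · refine ⟨∅, ⟨fun _ => ∅, fun _ => aux_kcompact_empty hunc, by simp⟩,
        Set.empty_subset _⟩
    · obtain ⟨e⟩ := (Cardinal.le_def _ _).1 hA
      set g : K → (K → K) := fun k =>
        if h : ∃ a : ↥A, e a = k then ((h.choose : ↥A) : K → K) else a0 with hg
      refine ⟨⋃ k, {g k}, ⟨fun k => {g k}, fun k => aux_kcompact_singleton hunc (g k),
        rfl⟩, ?_⟩
      intro a ha
      have hex : ∃ a' : ↥A, e a' = e ⟨a, ha⟩ := ⟨⟨a, ha⟩, rfl⟩
      have hgk : g (e ⟨a, ha⟩) = a := by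
        rw [hg]
        simp only []
        rw [dif_pos hex]
        have : hex.choose = ⟨a, ha⟩ := e.injective hex.choose_spec
        rw [this]
      exact Set.mem_iUnion.2 ⟨e ⟨a, ha⟩, by rw [hgk]; exact Set.mem_singleton a⟩
end AuxLemmas3
end
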